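/- Under all-to-all unique shortest-path routing in G̅_q, each edge joining a degree-q vertex to a degree-(q+1) vertex carries exactly 2q shortest paths (in each direction), and each edge joining two degree-(q+1) vertices carries exactly 2q−1 shortest paths. -/

import Mathlib

open Projectivization

/-- Orthogonality of projective points: scalar product of representatives is zero. -/
def ortho {F : Type} [Field F] (P L : Projectivization F (Fin 3 → F)) : Prop :=
  dotProduct P.rep L.rep = 0

instance {F : Type} [Field F] [Finite F] :
    Finite (Projectivization F (Fin 3 → F)) := Quotient.finite _

noncomputable instance {F : Type} [Field F] [Fintype F] :
    Fintype (Projectivization F (Fin 3 → F)) := Fintype.ofFinite _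

/-- The incidence graph `G_q` of the projective plane over `F`. -/
def projGraph (F : Type) [Field F] :
    SimpleGraph (Bool × Projectivization F (Fin 3 → F)) where
  Adj v w := v.1 ≠ w.1 ∧ ortho v.2 w.2
  symm := by
    constructor
    rintro ⟨s, P⟩ ⟨t, L⟩ ⟨h1, h2⟩
    exact ⟨h1.symm, by rwa [ortho, dotProduct_comm]⟩
  loopless := by constructor; rintro ⟨s, P⟩ ⟨h, _⟩; exact h rfl

/-- The modified incidence (polarity) graph `G̅_q` of the projective plane over `F`. -/
def polarityGraph (F : Type) [Field F] :
    SimpleGraph (Projectivization F (Fin 3 → F)) where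
  Adj P L := P ≠ L ∧ ortho P L
  symm := by
    constructor
    rintro P L ⟨h1, h2⟩
    exact ⟨h1.symm, by rwa [ortho, dotProduct_comm]⟩
  loopless := by constructor; rintro P ⟨h, _⟩; exact h rfl

/-- The load of the directed edge `(a, b)`: the number of ordered pairs `(u, v)` of distinct
vertices whose (unique) shortest path traverses the dart `(a, b)`. -/
noncomputable def edgeLoad (F : Type) [Field F]
    (a b : Projectivization F (Fin 3 → F)) : ℕ :=
  Nat.card {p : Projectivization F (Fin 3 → F) × Projectivization F (Fin 3 → F) //
    p.1 ≠ p.2 ∧ ∃ w : (polarityGraph F).Walk p.1 p.2, w.IsPath ∧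
      w.length = (polarityGraph F).dist p.1 p.2 ∧ ∃ d ∈ w.darts, d.toProd = (a, b)}

/-!
In a graph of diameter at most two a geodesic has length one or two, so the ordered pairs routed
through the dart `(a, b)` are `(a, b)` itself, the pairs `(a, v)` with `v` a neighbour of `b` at
distance two from `a`, and symmetrically the pairs `(u, b)`. Counting them gives
`load (a, b) = deg a + deg b - 1 - 2 |N(a) ∩ N(b)|`.

The polarity graph has diameter two because distinct points `u ≠ v` have exactly one common
perpendicular, `u × v`. A point has degree `q` if it is absolute (self-orthogonal) and `q + 1`
otherwise. For adjacent `a, b` the only candidate common neighbour is `a × b`, which equals `a`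
when `a` is absolute and is a genuine common neighbour when neither endpoint is absolute.
-/

open scoped LinearAlgebra.Projectivization

namespace SimpleGraph

variable {V : Type*} (G : SimpleGraph V)

def geodesicPairsThrough (a b : V) : Set (V × V) :=
  {p | p.1 ≠ p.2 ∧ ∃ w : G.Walk p.1 p.2, w.IsPath ∧
    w.length = G.dist p.1 p.2 ∧ ∃ d ∈ w.darts, d.toProd = (a, b)}

variable {G}

theorem Walk.exists_length_one_dart_iff {u v a b : V} :
    (∃ w : G.Walk u v, w.length = 1 ∧ ∃ d ∈ w.darts, d.toProd = (a, b)) ↔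
      G.Adj u v ∧ u = a ∧ v = b := by
  constructor
  · rintro ⟨_ | ⟨h, _ | ⟨_, _⟩⟩, hw, d, hd, hdab⟩ <;> simp only [Walk.length_nil,
      Walk.length_cons, zero_add, Nat.zero_ne_one, Nat.reduceEqDiff] at hw
    simp only [darts_cons, darts_nil, List.mem_singleton] at hd
    subst hd
    simp only [Prod.mk.injEq] at hdab
    exact ⟨h, hdab⟩
  · rintro ⟨h, rfl, rfl⟩
    exact ⟨h.toWalk, rfl, ⟨_, h⟩, by simp, rfl⟩

theorem Walk.exists_length_two_dart_iff {u v a b : V} (hab : G.Adj a b) :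
    (∃ w : G.Walk u v, w.length = 2 ∧ ∃ d ∈ w.darts, d.toProd = (a, b)) ↔
      u = a ∧ G.Adj b v ∨ G.Adj u a ∧ v = b := by
  constructor
  · rintro ⟨_ | ⟨h₁, _ | ⟨h₂, _ | ⟨_, _⟩⟩⟩, hw, d, hd, hdab⟩ <;> simp only [Walk.length_nil,
      Walk.length_cons, zero_add, Nat.reduceEqDiff] at hw
    simp only [darts_cons, darts_nil, List.mem_cons, List.not_mem_nil, or_false] at hd
    rcases hd with rfl | rfl <;> simp only [Prod.mk.injEq] at hdab
    · obtain ⟨rfl, rfl⟩ := hdab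
      exact .inl ⟨rfl, h₂⟩
    · obtain ⟨rfl, rfl⟩ := hdab
      exact .inr ⟨h₁, rfl⟩
  · rintro (⟨rfl, h⟩ | ⟨h, rfl⟩)
    · exact ⟨.cons hab (.cons h .nil), rfl, ⟨_, hab⟩, by simp, rfl⟩
    · exact ⟨.cons h (.cons hab .nil), rfl, ⟨_, hab⟩, by simp, rfl⟩

theorem dist_eq_two_of_ediam_le_two (hG : G.ediam ≤ 2) {u v : V} (huv : u ≠ v)
    (h : ¬G.Adj u v) : G.dist u v = 2 := by
  have hle : G.edist u v ≤ 2 := edist_le_ediam.trans hG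
  have hreach : G.Reachable u v :=
    edist_ne_top_iff_reachable.1 (ne_top_of_le_ne_top (by simp) hle)
  have hle' : G.dist u v ≤ 2 := by exact_mod_cast hreach.coe_dist_eq_edist ▸ hle
  have hlt := hreach.one_lt_dist_of_ne_of_not_adj huv h
  omega

theorem geodesicPairsThrough_eq (hG : G.ediam ≤ 2) {a b : V} (hab : G.Adj a b) :
    G.geodesicPairsThrough a b = insert (a, b)
      (Prod.mk a '' (G.neighborSet b \ insert a (G.neighborSet a)) ∪
        (·, b) '' (G.neighborSet a \ insert b (G.neighborSet b))) := by
  ext ⟨u, v⟩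
  have hgeodesic : (u, v) ∈ G.geodesicPairsThrough a b ↔ u ≠ v ∧
      ∃ w : G.Walk u v, w.length = G.dist u v ∧ ∃ d ∈ w.darts, d.toProd = (a, b) :=
    and_congr_right fun _ => ⟨fun ⟨w, _, hw⟩ => ⟨w, hw⟩,
      fun ⟨w, hw⟩ => ⟨w, w.isPath_of_length_eq_dist hw.1, hw⟩⟩
  simp only [hgeodesic, Set.mem_insert_iff, Set.mem_union, Set.mem_image, Set.mem_sdiff,
    mem_neighborSet, Prod.mk.injEq]
  by_cases huv : u = v
  · grind [SimpleGraph.irrefl]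
  by_cases hadj : G.Adj u v
  · rw [dist_eq_one_iff_adj.2 hadj, Walk.exists_length_one_dart_iff]
    grind [adj_comm, SimpleGraph.irrefl]
  · rw [dist_eq_two_of_ediam_le_two hG huv hadj, Walk.exists_length_two_dart_iff hab]
    grind [adj_comm, SimpleGraph.irrefl]

theorem Adj.ncard_neighborSet_sdiff_add_ncard_commonNeighbors [Finite V] {a b : V}
    (hab : G.Adj a b) :
    (G.neighborSet b \ insert a (G.neighborSet a)).ncard + 1 + (G.commonNeighbors a b).ncard =
      (G.neighborSet b).ncard := by
  have hinter : G.neighborSet b ∩ insert a (G.neighborSet a) =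
      insert a (G.commonNeighbors a b) := by
    ext x
    simp only [Set.mem_inter_iff, Set.mem_insert_iff, mem_neighborSet, mem_commonNeighbors]
    grind [adj_comm]
  have hsplit := Set.ncard_inter_add_ncard_sdiff_eq_ncard (G.neighborSet b)
    (insert a (G.neighborSet a))
  rw [hinter, Set.ncard_insert_of_notMem (by simp [mem_commonNeighbors])] at hsplit
  omega

theorem ncard_geodesicPairsThrough_add [Finite V] (hG : G.ediam ≤ 2) {a b : V}
    (hab : G.Adj a b) :
    (G.geodesicPairsThrough a b).ncard + 1 + 2 * (G.commonNeighbors a b).ncard =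
      (G.neighborSet a).ncard + (G.neighborSet b).ncard := by
  have hcount_b := hab.ncard_neighborSet_sdiff_add_ncard_commonNeighbors
  have hcount_a := hab.symm.ncard_neighborSet_sdiff_add_ncard_commonNeighbors
  rw [commonNeighbors_symm] at hcount_a
  rw [geodesicPairsThrough_eq hG hab, Set.ncard_insert_of_notMem, Set.ncard_union_eq,
    Set.ncard_image_of_injective _ (Prod.mk_right_injective a),
    Set.ncard_image_of_injective _ (Prod.mk_left_injective b)]
  · omega
  · rw [Set.disjoint_left]
    rintro _ ⟨v, ⟨hv, -⟩, rfl⟩ ⟨u, -, huv⟩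
    cases huv
    exact G.irrefl hv
  · rintro (⟨v, ⟨hv, -⟩, hvb⟩ | ⟨u, ⟨hu, -⟩, hua⟩)
    · cases hvb
      exact G.irrefl hv
    · cases hua
      exact G.irrefl hu

end SimpleGraph

namespace Projectivization

variable {F : Type} [Field F]

theorem ortho_iff_orthogonal (P L : ℙ F (Fin 3 → F)) : ortho P L ↔ P.orthogonal L := by
  conv_rhs => rw [← P.mk_rep, ← L.mk_rep, orthogonal_mk]
  rfl

theorem eq_cross_of_orthogonal [DecidableEq F] {v w x : ℙ F (Fin 3 → F)} (hvw : v ≠ w)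
    (hv : v.orthogonal x) (hw : w.orthogonal x) : x = cross v w := by
  induction v with | h v hv0 =>
  induction w with | h w hw0 =>
  induction x with | h x hx0 =>
  rw [orthogonal_mk] at hv hw
  rw [cross_mk_of_ne hv0 hw0 hvw, mk_eq_mk_iff_crossProduct_eq_zero,
    cross_cross_eq_smul_sub_smul', dotProduct_comm x w, hw, hv, zero_smul, zero_smul, sub_zero]

theorem ncard_setOf_orthogonal [Finite F] (v : ℙ F (Fin 3 → F)) :
    {x | v.orthogonal x}.ncard = Nat.card F + 1 := by
  induction v with | h v hv =>
  let f := dotProductEquiv F (Fin 3) v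
  have hf : f ≠ 0 := (LinearEquiv.map_ne_zero_iff _).2 hv
  have hker : Module.finrank F (LinearMap.ker f) = 2 := by
    have := Module.Dual.finrank_ker_add_one_of_ne_zero hf
    simp only [Module.finrank_fin_fun] at this
    omega
  rw [← card_of_finrank_two F _ hker,
    ← Set.ncard_range_of_injective (map_injective _ (LinearMap.ker f).subtype_injective)]
  congr 1
  ext x
  induction x with | h x hx =>
  rw [Set.mem_ofPred, orthogonal_mk, Set.mem_range]
  constructor
  · intro h
    exact ⟨mk F ⟨x, h⟩ (Subtype.coe_ne_coe.1 hx), rfl⟩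
  · rintro ⟨y, hy⟩
    induction y with | h y hy0 =>
    obtain ⟨c, hc⟩ := (mk_eq_mk_iff _ _ _ _ _).1 hy
    have h : c • (v ⬝ᵥ x) = 0 := by rw [← dotProduct_smul, hc]; exact y.2
    exact (smul_eq_zero_iff_eq c).1 h

end Projectivization

section PolarityGraph

variable {F : Type} [Field F]

theorem polarityGraph_adj_iff {P L : ℙ F (Fin 3 → F)} :
    (polarityGraph F).Adj P L ↔ P ≠ L ∧ P.orthogonal L :=
  and_congr_right' (ortho_iff_orthogonal P L)

theorem polarityGraph_neighborSet (v : ℙ F (Fin 3 → F)) :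
    (polarityGraph F).neighborSet v = {x | v.orthogonal x} \ {v} := by
  ext x
  simp only [SimpleGraph.mem_neighborSet, polarityGraph_adj_iff, Set.mem_sdiff, Set.mem_ofPred,
    Set.mem_singleton_iff]
  grind

theorem ncard_polarityGraph_neighborSet_of_orthogonal_self [Finite F] {v : ℙ F (Fin 3 → F)}
    (hv : v.orthogonal v) : ((polarityGraph F).neighborSet v).ncard = Nat.card F := by
  rw [polarityGraph_neighborSet, Set.ncard_sdiff_singleton_of_mem (s := {x | v.orthogonal x}) hv,
    ncard_setOf_orthogonal, Nat.add_sub_cancel]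

theorem ncard_polarityGraph_neighborSet_of_not_orthogonal_self [Finite F]
    {v : ℙ F (Fin 3 → F)} (hv : ¬v.orthogonal v) :
    ((polarityGraph F).neighborSet v).ncard = Nat.card F + 1 := by
  rw [polarityGraph_neighborSet, Set.sdiff_singleton_eq_self (s := {x | v.orthogonal x}) hv,
    ncard_setOf_orthogonal]

theorem polarityGraph_commonNeighbors [DecidableEq F] {u v : ℙ F (Fin 3 → F)} (huv : u ≠ v) :
    (polarityGraph F).commonNeighbors u v = {cross u v} \ {u, v} := by
  ext x
  simp only [SimpleGraph.mem_commonNeighbors, polarityGraph_adj_iff, Set.mem_sdiff,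
    Set.mem_singleton_iff, Set.mem_insert_iff]
  constructor
  · rintro ⟨⟨hux, hu⟩, hvx, hv⟩
    exact ⟨eq_cross_of_orthogonal huv hu hv, by grind⟩
  · rintro ⟨rfl, hx⟩
    exact ⟨⟨by grind, orthogonal_cross_left huv⟩, by grind, orthogonal_cross_right huv⟩

theorem polarityGraph_ediam_le_two : (polarityGraph F).ediam ≤ 2 := by
  classical
  refine SimpleGraph.ediam_le_of_edist_le fun u v => ?_
  by_cases huv : u = v
  · simp [huv]
  by_cases hadj : (polarityGraph F).Adj u v
  · rw [SimpleGraph.edist_eq_one_iff_adj.2 hadj]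
    norm_num
  refine (SimpleGraph.edist_eq_two_iff.2 ⟨huv, hadj, cross u v, ?_⟩).le
  rw [polarityGraph_commonNeighbors huv]
  refine ⟨rfl, ?_⟩
  rw [Set.mem_insert_iff, Set.mem_singleton_iff]
  rintro (h | h) <;> refine hadj (polarityGraph_adj_iff.2 ⟨huv, ?_⟩)
  · exact orthogonal_comm.1 (h ▸ orthogonal_cross_right huv)
  · exact h ▸ orthogonal_cross_left huv

theorem polarityGraph_commonNeighbors_eq_empty {a b : ℙ F (Fin 3 → F)}
    (hab : (polarityGraph F).Adj a b) (ha : a.orthogonal a) :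
    (polarityGraph F).commonNeighbors a b = ∅ := by
  classical
  have hab' := polarityGraph_adj_iff.1 hab
  rw [polarityGraph_commonNeighbors hab'.1,
    ← eq_cross_of_orthogonal hab'.1 ha (orthogonal_comm.1 hab'.2)]
  exact Set.sdiff_eq_empty.2 (by simp)

theorem ncard_polarityGraph_commonNeighbors_of_not_orthogonal_self {a b : ℙ F (Fin 3 → F)}
    (hab : (polarityGraph F).Adj a b) (ha : ¬a.orthogonal a) (hb : ¬b.orthogonal b) :
    ((polarityGraph F).commonNeighbors a b).ncard = 1 := by
  classical
  have hab' := polarityGraph_adj_iff.1 hab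
  rw [polarityGraph_commonNeighbors hab'.1, sdiff_eq_left.2, Set.ncard_singleton]
  rw [Set.disjoint_singleton_left, Set.mem_insert_iff, Set.mem_singleton_iff]
  rintro (h | h)
  · exact ha (by simpa only [h] using orthogonal_cross_left hab'.1)
  · exact hb (by simpa only [h] using orthogonal_cross_right hab'.1)

theorem edgeLoad_eq_ncard (a b : ℙ F (Fin 3 → F)) :
    edgeLoad F a b = ((polarityGraph F).geodesicPairsThrough a b).ncard :=
  rfl

end PolarityGraph

theorem polarityGraph_edge_loads_general (q : ℕ)
    (F : Type) [Field F] [Fintype F] (hF : Fintype.card F = q) :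
    ∀ a b : Projectivization F (Fin 3 → F), (polarityGraph F).Adj a b →
      (((Nat.card ((polarityGraph F).neighborSet a) = q ∧
         Nat.card ((polarityGraph F).neighborSet b) = q + 1) ∨
        (Nat.card ((polarityGraph F).neighborSet a) = q + 1 ∧
         Nat.card ((polarityGraph F).neighborSet b) = q)) →
        edgeLoad F a b = 2 * q) ∧
      ((Nat.card ((polarityGraph F).neighborSet a) = q + 1 ∧
        Nat.card ((polarityGraph F).neighborSet b) = q + 1) →
        edgeLoad F a b = 2 * q - 1) := by
  intro a b hab
  simp only [Nat.card_coe_set_eq]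
  have hq : Nat.card F = q := Nat.card_eq_fintype_card.trans hF
  have hload := SimpleGraph.ncard_geodesicPairsThrough_add polarityGraph_ediam_le_two hab
  rw [← edgeLoad_eq_ncard] at hload
  have habs (v) (hv : ((polarityGraph F).neighborSet v).ncard = q) : v.orthogonal v := by
    by_contra h
    rw [ncard_polarityGraph_neighborSet_of_not_orthogonal_self h] at hv
    omega
  have hnabs (v) (hv : ((polarityGraph F).neighborSet v).ncard = q + 1) : ¬v.orthogonal v := by
    intro h
    rw [ncard_polarityGraph_neighborSet_of_orthogonal_self h] at hv
    omega
  refine ⟨fun hdeg => ?_, fun ⟨ha, hb⟩ => ?_⟩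
  · have hempty : (polarityGraph F).commonNeighbors a b = ∅ := by
      rcases hdeg with ⟨ha, -⟩ | ⟨-, hb⟩
      · exact polarityGraph_commonNeighbors_eq_empty hab (habs a ha)
      · rw [SimpleGraph.commonNeighbors_symm]
        exact polarityGraph_commonNeighbors_eq_empty hab.symm (habs b hb)
    rw [hempty, Set.ncard_empty] at hload
    omega
  · rw [ncard_polarityGraph_commonNeighbors_of_not_orthogonal_self hab (hnabs a ha)
      (hnabs b hb)] at hload
    omega

/-- Under all-to-all unique shortest-path routing in `G̅_q`, each edge joining a degree-`q`
vertex to a degree-`(q+1)` vertex carries exactly `2q` shortest paths in each direction, and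
each edge joining two degree-`(q+1)` vertices carries exactly `2q - 1`. -/
theorem polarityGraph_edge_loads (q : ℕ) (hq : IsPrimePow q)
    (F : Type) [Field F] [Fintype F] (hF : Fintype.card F = q) :
    ∀ a b : Projectivization F (Fin 3 → F), (polarityGraph F).Adj a b →
      (((Nat.card ((polarityGraph F).neighborSet a) = q ∧
         Nat.card ((polarityGraph F).neighborSet b) = q + 1) ∨
        (Nat.card ((polarityGraph F).neighborSet a) = q + 1 ∧
         Nat.card ((polarityGraph F).neighborSet b) = q)) →
        edgeLoad F a b = 2 * q) ∧
      ((Nat.card ((polarityGraph F).neighborSet a) = q + 1 ∧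
        Nat.card ((polarityGraph F).neighborSet b) = q + 1) →
        edgeLoad F a b = 2 * q - 1) :=
  polarityGraph_edge_loads_general q F hF
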